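/- arXiv:1510.05130 — 6 statements merged into one kernel-verified Lean document; each statement's English description precedes it below -/
import Mathlib

section
/- Let A = [a_ij] ∈ ℂ^{n×n}, n ≥ 2, be a DD matrix such that either T(A) = ∅, or for each i₀ ∈ T(A) there exists a nonzero elements chain a_{i₀i₁}, a_{i₁i₂}, …, a_{i_{r-1}i_r} with i_r ∈ N \ T(A). Then A is nonsingular. -/
open scoped BigOperators

noncomputable section

/-- Deleted `i`-th row sum of `|A|`, restricted to the index set `S`
    (i.e. `r_i^S(A) = ∑_{j ∈ S \ {i}} |a_{ij}|`). -/
def rowSumOn {ι : Type*} [Fintype ι] [DecidableEq ι]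
    (A : Matrix ι ι ℂ) (S : Finset ι) (i : ι) : ℝ :=
  ∑ j ∈ S.erase i, ‖A i j‖

/-- Deleted `i`-th row sum `r_i(A) = ∑_{j ≠ i} |a_{ij}|`. -/
def rowSum {ι : Type*} [Fintype ι] [DecidableEq ι]
    (A : Matrix ι ι ℂ) (i : ι) : ℝ :=
  rowSumOn A Finset.univ i

/-- `A` is strictly diagonally dominant (SDD). -/
def IsSDD {ι : Type*} [Fintype ι] [DecidableEq ι] (A : Matrix ι ι ℂ) : Prop :=
  ∀ i, rowSum A i < ‖A i i‖

/-- `A` is diagonally dominant (DD). -/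
def IsDD {ι : Type*} [Fintype ι] [DecidableEq ι] (A : Matrix ι ι ℂ) : Prop :=
  ∀ i, rowSum A i ≤ ‖A i i‖

/-- `A` is DD+ : diagonally dominant with at least one strictly dominant row. -/
def IsDDplus {ι : Type*} [Fintype ι] [DecidableEq ι] (A : Matrix ι ι ℂ) : Prop :=
  IsDD A ∧ ∃ i, rowSum A i < ‖A i i‖

/-- `A` is an H-matrix: there is a diagonal matrix `D` with positive diagonal
    entries such that `A * D` is SDD. -/
def IsHMatrix {ι : Type*} [Fintype ι] [DecidableEq ι] (A : Matrix ι ι ℂ) : Prop :=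
  ∃ d : ι → ℝ, (∀ i, 0 < d i) ∧ IsSDD (A * Matrix.diagonal fun i => (d i : ℂ))

/-- `T(A)`: the set of indices of non-SDD rows of `A`. -/
def TSet {ι : Type*} [Fintype ι] [DecidableEq ι] (A : Matrix ι ι ℂ) : Finset ι :=
  Finset.univ.filter fun i => ‖A i i‖ ≤ rowSum A i

/-- The principal submatrix `A|_{M²}` of `A` corresponding to the index set `M`. -/
def subMat {ι : Type*} [Fintype ι] [DecidableEq ι]
    (A : Matrix ι ι ℂ) (M : Finset ι) : Matrix {i // i ∈ M} {i // i ∈ M} ℂ :=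
  Matrix.of fun i j => A i.val j.val

/-- There exists a nonzero elements chain `a_{i₀i₁}, a_{i₁i₂}, …, a_{i_{r-1}i_r}`
    starting at `i₀` and ending at some `i_r ∉ T(A)`. -/
def HasChainOut {ι : Type*} [Fintype ι] [DecidableEq ι]
    (A : Matrix ι ι ℂ) (i₀ : ι) : Prop :=
  ∃ (r : ℕ) (c : Fin (r + 1) → ι), 0 < r ∧ c 0 = i₀ ∧
    (∀ k : Fin r, A (c k.castSucc) (c k.succ) ≠ 0) ∧ c (Fin.last r) ∉ TSet A

/-- `S` is an interwoven set of indices for `A`: `S` is a proper subset of `N`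
    and either `|S| ≤ 1`, or `|S| = s > 1` and there exist distinct
    `p₁,…,p_{s-1} ∈ S` and `q₁,…,q_{s-1}` with `q₁ ∈ N \ S`, `a_{p₁q₁} ≠ 0`, and
    `q_i ∈ (N \ S) ∪ {p₁,…,p_{i-1}}`, `a_{p_iq_i} ≠ 0` for `i = 2,…,s-1`. -/
def Interwoven {ι : Type*} [Fintype ι] [DecidableEq ι]
    (A : Matrix ι ι ℂ) (S : Finset ι) : Prop :=
  S ⊂ Finset.univ ∧
    (S.card ≤ 1 ∨
      (1 < S.card ∧ ∃ p q : Fin (S.card - 1) → ι,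
        Function.Injective p ∧ (∀ i, p i ∈ S) ∧
        ∀ i, A (p i) (q i) ≠ 0 ∧ (q i ∉ S ∨ ∃ j, j < i ∧ q i = p j)))

/-- The comparison matrix `ℳ(A)`. -/
def CompMat {ι : Type*} [Fintype ι] [DecidableEq ι] (A : Matrix ι ι ℂ) : Matrix ι ι ℝ :=
  Matrix.of fun i j => if i = j then ‖A i i‖ else -‖A i j‖

/-!
Take `x ≠ 0` with `A x = 0` and look at the indices where `|x_i|` is maximal. Row `i` of
`A x = 0` gives `|a_ii| |x_i| ≤ ∑_{j ≠ i} |a_ij| |x_j| ≤ r_i(A) |x_i|`, so every such `i` lies in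
`T(A)`; and when `A` is DD both inequalities are equalities, which forces `|x_j| = |x_i|`
whenever `a_ij ≠ 0`. Hence maximality propagates along nonzero elements chains, and a chain
from a maximal index can never leave `T(A)`.
-/

theorem forall_of_chain {α : Type*} {R : α → α → Prop} {P : α → Prop}
    (hP : ∀ a b, P a → R a b → P b) {r : ℕ} (c : Fin (r + 1) → α)
    (hc : ∀ k : Fin r, R (c k.castSucc) (c k.succ)) (h0 : P (c 0)) (k : Fin (r + 1)) :
    P (c k) := by
  induction k using Fin.induction with
  | zero => exact h0
  | succ k ih => exact hP _ _ ih (hc k)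

section KernelVector

open Matrix

variable {ι : Type*} [Fintype ι] [DecidableEq ι] {A : Matrix ι ι ℂ} {x : ι → ℂ} {i : ι}

theorem norm_diag_mul_norm_le_of_mulVec_eq_zero (hx : A *ᵥ x = 0) (i : ι) :
    ‖A i i‖ * ‖x i‖ ≤ ∑ j ∈ Finset.univ.erase i, ‖A i j‖ * ‖x j‖ := by
  have hrow : A i i * x i = -∑ j ∈ Finset.univ.erase i, A i j * x j := by
    rw [eq_neg_iff_add_eq_zero, Finset.add_sum_erase _ (fun j => A i j * x j) (Finset.mem_univ i)]
    simpa [Matrix.mulVec, dotProduct] using congrFun hx i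
  calc ‖A i i‖ * ‖x i‖ = ‖∑ j ∈ Finset.univ.erase i, A i j * x j‖ := by
        rw [← norm_mul, hrow, norm_neg]
    _ ≤ ∑ j ∈ Finset.univ.erase i, ‖A i j‖ * ‖x j‖ := by
        simpa only [norm_mul] using norm_sum_le (Finset.univ.erase i) fun j => A i j * x j

theorem sum_norm_mul_norm_le_rowSum_mul (hmax : ∀ j, ‖x j‖ ≤ ‖x i‖) :
    ∑ j ∈ Finset.univ.erase i, ‖A i j‖ * ‖x j‖ ≤ rowSum A i * ‖x i‖ := by
  rw [rowSum, rowSumOn, Finset.sum_mul]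
  exact Finset.sum_le_sum fun j _ => mul_le_mul_of_nonneg_left (hmax j) (norm_nonneg _)

theorem mem_TSet_of_mulVec_eq_zero (hx : A *ᵥ x = 0) (hx0 : x ≠ 0)
    (hmax : ∀ j, ‖x j‖ ≤ ‖x i‖) : i ∈ TSet A := by
  obtain ⟨j, hxj⟩ := Function.ne_iff.mp hx0
  have hxi : 0 < ‖x i‖ := (norm_pos_iff.mpr hxj).trans_le (hmax j)
  simp only [TSet, Finset.mem_filter, Finset.mem_univ, true_and]
  refine le_of_mul_le_mul_right ?_ hxi
  exact (norm_diag_mul_norm_le_of_mulVec_eq_zero hx i).trans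
    (sum_norm_mul_norm_le_rowSum_mul hmax)

theorem norm_eq_of_mulVec_eq_zero_of_ne_zero (hDD : IsDD A) (hx : A *ᵥ x = 0)
    (hmax : ∀ j, ‖x j‖ ≤ ‖x i‖) {j : ι} (hij : A i j ≠ 0) : ‖x j‖ = ‖x i‖ := by
  obtain rfl | hji := eq_or_ne j i
  · rfl
  have hslack : ∑ k ∈ Finset.univ.erase i, ‖A i k‖ * (‖x i‖ - ‖x k‖) = 0 := by
    have hsum : ∑ k ∈ Finset.univ.erase i, ‖A i k‖ * (‖x i‖ - ‖x k‖) =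
        rowSum A i * ‖x i‖ - ∑ k ∈ Finset.univ.erase i, ‖A i k‖ * ‖x k‖ := by
      simp only [mul_sub, Finset.sum_sub_distrib, rowSum, rowSumOn, Finset.sum_mul]
    have hdiag := norm_diag_mul_norm_le_of_mulVec_eq_zero hx i
    have hdom := mul_le_mul_of_nonneg_right (hDD i) (norm_nonneg (x i))
    have hle := sum_norm_mul_norm_le_rowSum_mul (A := A) hmax
    linarith
  have hterm := (Finset.sum_eq_zero_iff_of_nonneg fun k _ =>
    mul_nonneg (norm_nonneg _) (sub_nonneg.mpr (hmax k))).mp hslack j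
    (Finset.mem_erase.mpr ⟨hji, Finset.mem_univ j⟩)
  rcases mul_eq_zero.mp hterm with h | h
  · exact absurd (norm_eq_zero.mp h) hij
  · linarith

end KernelVector

theorem shivakumar_chew_nonsingular_general (n : ℕ)
    (A : Matrix (Fin n) (Fin n) ℂ) (hDD : IsDD A)
    (hchain : TSet A = ∅ ∨ ∀ i₀ ∈ TSet A, HasChainOut A i₀) :
    A.det ≠ 0 := by
  intro hdet
  obtain ⟨x, hx0, hx⟩ := Matrix.exists_mulVec_eq_zero_iff.mpr hdet
  have : Nonempty (Fin n) := ⟨(Function.ne_iff.mp hx0).choose⟩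
  obtain ⟨i₀, hi₀⟩ := Finite.exists_max fun i => ‖x i‖
  rcases hchain with hempty | hchain
  · simpa [hempty] using mem_TSet_of_mulVec_eq_zero hx hx0 hi₀
  obtain ⟨r, c, -, rfl, hstep, hout⟩ := hchain _ (mem_TSet_of_mulVec_eq_zero hx hx0 hi₀)
  have hmax_last : ∀ k, ‖x k‖ ≤ ‖x (c (Fin.last r))‖ :=
    forall_of_chain (R := fun a b => A a b ≠ 0) (P := fun i => ∀ k, ‖x k‖ ≤ ‖x i‖)
      (fun a b ha hab k => norm_eq_of_mulVec_eq_zero_of_ne_zero hDD hx ha hab ▸ ha k)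
      c hstep hi₀ _
  exact hout (mem_TSet_of_mulVec_eq_zero hx hx0 hmax_last)

/-- Shivakumar–Chew. A DD matrix `A ∈ ℂⁿˣⁿ`, `n ≥ 2`, such that
`T(A) = ∅` or every `i₀ ∈ T(A)` has a nonzero elements chain ending outside
`T(A)`, is nonsingular. -/
theorem shivakumar_chew_nonsingular (n : ℕ) (hn : 2 ≤ n)
    (A : Matrix (Fin n) (Fin n) ℂ) (hDD : IsDD A)
    (hchain : TSet A = ∅ ∨ ∀ i₀ ∈ TSet A, HasChainOut A i₀) :
    A.det ≠ 0 :=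
  shivakumar_chew_nonsingular_general n A hDD hchain

end
end

section
/- Let A = [a_ij] ∈ ℂ^{n×n}, n ≥ 2, be a DD matrix such that either T(A) = ∅, or for each i₀ ∈ T(A) there exists a nonzero elements chain a_{i₀i₁}, a_{i₁i₂}, …, a_{i_{r-1}i_r} with i_r ∈ N \ T(A). Then A is an H-matrix. -/
open scoped BigOperators

noncomputable section

/- A DD matrix becomes SDD under the scaling `d = 1 - ε w`, `ε > 0` small, as soon as weights
`0 ≤ w ≤ 1` make every row in `T(A)` strictly dominant, `|a_ii| w_i < ∑_{j ≠ i} |a_ij| w_j`: the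
rows outside `T(A)` have slack to spare, and the rows in `T(A)` gain. Take `w_i = t ^ L(i)`, where
`L(i)` is the length of a shortest nonzero elements chain from `i` out of `T(A)`. For `i ∈ T(A)`
the next index `j` of such a chain has `L(j) < L(i)`, so `|a_ij| w_j ≥ |a_ij| t ^ (L(i) - 1)`
exceeds `|a_ii| t ^ L(i)` once `t` is small compared with the nonzero entries of `A`. -/

open Finset Filter Topology

lemma exists_pos_lt_one_forall_mul_lt {κ : Type*} [Finite κ] (a b : κ → ℝ)
    (hb : ∀ k, 0 < b k) : ∃ t : ℝ, 0 < t ∧ t < 1 ∧ ∀ k, t * a k < b k := by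
  have hsmall : ∀ k, ∀ᶠ t in 𝓝 (0 : ℝ), t * a k < b k := fun k =>
    (continuous_id.mul continuous_const).continuousAt.eventually_lt continuousAt_const
      (by simpa using hb k)
  have hall : ∀ᶠ t in 𝓝[>] (0 : ℝ), 0 < t ∧ t < 1 ∧ ∀ k, t * a k < b k :=
    (eventually_mem_nhdsWithin (a := 0) (s := Set.Ioi 0)).and
      (nhdsWithin_le_nhds ((eventually_lt_nhds one_pos).and (eventually_all.2 hsmall)))
  exact hall.exists

section

variable {ι : Type*} [Fintype ι] [DecidableEq ι] (A : Matrix ι ι ℂ)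

lemma norm_mul_diagonal_apply {d : ι → ℝ} (hd : ∀ i, 0 ≤ d i) (i j : ι) :
    ‖(A * Matrix.diagonal fun k => (d k : ℂ)) i j‖ = ‖A i j‖ * d j := by
  rw [Matrix.mul_diagonal, norm_mul, Complex.norm_real, Real.norm_of_nonneg (hd j)]

lemma rowSum_mul_diagonal {d : ι → ℝ} (hd : ∀ i, 0 ≤ d i) (i : ι) :
    rowSum (A * Matrix.diagonal fun k => (d k : ℂ)) i = ∑ j ∈ univ.erase i, ‖A i j‖ * d j :=
  sum_congr rfl fun j _ => norm_mul_diagonal_apply A hd i j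

variable {A}

lemma IsDD.isHMatrix_of_weights (hDD : IsDD A) (w : ι → ℝ) (hw0 : ∀ i, 0 ≤ w i)
    (hw1 : ∀ i, w i ≤ 1)
    (hT : ∀ i ∈ TSet A, ‖A i i‖ * w i < ∑ j ∈ univ.erase i, ‖A i j‖ * w j) :
    IsHMatrix A := by
  have hgap : ∀ i : {i // i ∉ TSet A}, 0 < ‖A i i‖ - rowSum A i := fun i => by
    simpa [TSet] using i.2
  obtain ⟨ε, hε0, hε1, hε⟩ :=
    exists_pos_lt_one_forall_mul_lt (fun i : {i // i ∉ TSet A} => ‖A i i‖) _ hgap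
  have hd : ∀ i, 0 < 1 - ε * w i := fun i => by nlinarith [hw0 i, hw1 i]
  refine ⟨fun i => 1 - ε * w i, hd, fun i => ?_⟩
  rw [rowSum_mul_diagonal A (fun i => (hd i).le), norm_mul_diagonal_apply A (fun i => (hd i).le)]
  have hsum : ∑ j ∈ univ.erase i, ‖A i j‖ * (1 - ε * w j)
      = rowSum A i - ε * ∑ j ∈ univ.erase i, ‖A i j‖ * w j := by
    simp only [mul_sub, mul_one, sum_sub_distrib, mul_sum, rowSum, rowSumOn]
    congr 1
    exact sum_congr rfl fun j _ => by ring
  rw [hsum]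
  by_cases hi : i ∈ TSet A
  · nlinarith [hT i hi, hDD i]
  · have hsum0 : 0 ≤ ∑ j ∈ univ.erase i, ‖A i j‖ * w j :=
      sum_nonneg fun j _ => mul_nonneg (norm_nonneg _) (hw0 j)
    have hwi := mul_le_mul_of_nonneg_left (hw1 i) (mul_nonneg hε0.le (norm_nonneg (A i i)))
    nlinarith [hε ⟨i, hi⟩]

variable (A)

def ChainOutIn : ℕ → ι → Prop
  | 0, i => i ∉ TSet A
  | r + 1, i => ∃ j, A i j ≠ 0 ∧ ChainOutIn r j

/-- Junk value `sInf ∅ = 0` when no chain leads out of `T(A)`. -/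
def chainDist (i : ι) : ℕ := sInf {r | ChainOutIn A r i}

variable {A}

lemma chainOutIn_of_chain {r : ℕ} (c : Fin (r + 1) → ι)
    (hc : ∀ k : Fin r, A (c k.castSucc) (c k.succ) ≠ 0) (hlast : c (Fin.last r) ∉ TSet A) :
    ChainOutIn A r (c 0) := by
  induction r with
  | zero => exact hlast
  | succ r ih => exact ⟨c 1, hc 0, ih (fun k => c k.succ) (fun k => hc k.succ) hlast⟩

lemma HasChainOut.exists_chainOutIn {i : ι} (h : HasChainOut A i) : ∃ r, ChainOutIn A r i := by
  obtain ⟨r, c, -, rfl, hc, hlast⟩ := h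
  exact ⟨r, chainOutIn_of_chain c hc hlast⟩

lemma exists_chainDist_succ_le {i : ι} (h : ∃ r, ChainOutIn A r i) (hi : i ∈ TSet A) :
    ∃ j, A i j ≠ 0 ∧ chainDist A j + 1 ≤ chainDist A i := by
  have hmem : ChainOutIn A (chainDist A i) i := Nat.sInf_mem h
  obtain ⟨r, hr⟩ : ∃ r, chainDist A i = r + 1 := by
    cases hd : chainDist A i with
    | zero => rw [hd] at hmem; exact absurd hi hmem
    | succ r => exact ⟨r, rfl⟩
  rw [hr] at hmem ⊢
  obtain ⟨j, hij, hj⟩ := hmem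
  exact ⟨j, hij, Nat.succ_le_succ (Nat.sInf_le hj)⟩

lemma mul_pow_chainDist_lt_sum {t : ℝ} (ht0 : 0 < t) (ht1 : t ≤ 1)
    (ht : ∀ i j, A i j ≠ 0 → t * ‖A i i‖ < ‖A i j‖) {i : ι} (h : ∃ r, ChainOutIn A r i)
    (hi : i ∈ TSet A) :
    ‖A i i‖ * t ^ chainDist A i < ∑ j ∈ univ.erase i, ‖A i j‖ * t ^ chainDist A j := by
  obtain ⟨j, hij, hdist⟩ := exists_chainDist_succ_le h hi
  have hji : j ∈ univ.erase i := mem_erase.2 ⟨fun h => by subst h; omega, mem_univ j⟩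
  calc ‖A i i‖ * t ^ chainDist A i ≤ ‖A i i‖ * t ^ (chainDist A j + 1) :=
        mul_le_mul_of_nonneg_left (pow_le_pow_of_le_one ht0.le ht1 hdist) (norm_nonneg _)
    _ = t * ‖A i i‖ * t ^ chainDist A j := by ring
    _ < ‖A i j‖ * t ^ chainDist A j := by gcongr; exact ht i j hij
    _ ≤ ∑ k ∈ univ.erase i, ‖A i k‖ * t ^ chainDist A k :=
        single_le_sum (f := fun k => ‖A i k‖ * t ^ chainDist A k)
          (fun k _ => by positivity) hji

end

theorem shivakumar_chew_hmatrix_general (n : ℕ)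
    (A : Matrix (Fin n) (Fin n) ℂ) (hDD : IsDD A)
    (hchain : TSet A = ∅ ∨ ∀ i₀ ∈ TSet A, HasChainOut A i₀) :
    IsHMatrix A := by
  have hreach : ∀ i, ∃ r, ChainOutIn A r i := fun i => by
    by_cases hi : i ∈ TSet A
    · rcases hchain with hT | hchain
      · simp [hT] at hi
      · exact (hchain i hi).exists_chainOutIn
    · exact ⟨0, hi⟩
  obtain ⟨t, ht0, ht1, ht⟩ := exists_pos_lt_one_forall_mul_lt
    (fun p : {p : Fin n × Fin n // A p.1 p.2 ≠ 0} => ‖A p.1.1 p.1.1‖)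
    (fun p => ‖A p.1.1 p.1.2‖) (fun p => norm_pos_iff.2 p.2)
  exact hDD.isHMatrix_of_weights (fun i => t ^ chainDist A i) (fun i => by positivity)
    (fun i => pow_le_one₀ ht0.le ht1.le) fun i hi =>
      mul_pow_chainDist_lt_sum ht0 ht1.le (fun i j hij => ht ⟨(i, j), hij⟩) (hreach i) hi

/-- A DD matrix `A ∈ ℂⁿˣⁿ`, `n ≥ 2`, such that `T(A) = ∅` or
every `i₀ ∈ T(A)` has a nonzero elements chain ending outside `T(A)`,
is an H-matrix. -/
theorem shivakumar_chew_hmatrix (n : ℕ) (hn : 2 ≤ n)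
    (A : Matrix (Fin n) (Fin n) ℂ) (hDD : IsDD A)
    (hchain : TSet A = ∅ ∨ ∀ i₀ ∈ TSet A, HasChainOut A i₀) :
    IsHMatrix A :=
  shivakumar_chew_hmatrix_general n A hDD hchain

end
end

section
/- Let A = [a_ij] ∈ ℂ^{n×n}, n ≥ 2, be a DD matrix with nonzero diagonal entries, such that T(A) is an interwoven set of indices for A. Then A is nonsingular. -/
open scoped BigOperators

noncomputable section

/-!
If `A x = 0` with `x ≠ 0`, look at the indices `i` where `|x_i|` is maximal. Row `i` of `A x = 0`
together with diagonal dominance forces `i ∈ T(A)`, and forces `|x_j| = |x_i|` whenever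
`j ≠ i` and `a_ij ≠ 0`: so the set of maximal indices is a subset of `T(A)` that no nonzero
off-diagonal entry leaves. Following the chain `p₁, p₂, …` of an interwoven set, no `p_k` can
be maximal, so at most one index is maximal. But a maximal index `i` has `0 < |a_ii| ≤ r_i(A)`,
hence some `a_ij ≠ 0` with `j ≠ i`, and `j` is maximal too.
-/

open Finset Matrix

def IsOffDiagClosed {ι : Type*} (A : Matrix ι ι ℂ) (M : Finset ι) : Prop :=
  ∀ i ∈ M, ∀ j, j ≠ i → A i j ≠ 0 → j ∈ M

variable {ι : Type*} [Fintype ι] [DecidableEq ι] {A : Matrix ι ι ℂ}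

theorem exists_ne_ne_zero_of_rowSum_pos {i : ι} (h : 0 < rowSum A i) :
    ∃ j, j ≠ i ∧ A i j ≠ 0 := by
  by_contra! hzero
  have : rowSum A i = 0 :=
    sum_eq_zero fun j hj => by simp [hzero j (mem_erase.1 hj).1]
  exact h.ne' this

theorem Interwoven.card_le_one_of_isOffDiagClosed {S M : Finset ι} (hS : Interwoven A S)
    (hMS : M ⊆ S) (hM : IsOffDiagClosed A M) : M.card ≤ 1 := by
  rcases hS.2 with hcard | ⟨hcard, p, q, hp_inj, hpS, hpq⟩
  · exact (card_le_card hMS).trans hcard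
  have hpM : ∀ k, p k ∉ M := by
    intro k
    induction k using WellFoundedLT.induction with
    | _ k ih =>
      intro hk
      obtain ⟨hA, hqS | ⟨j, hjk, hqj⟩⟩ := hpq k
      · exact hqS (hMS (hM _ hk _ (fun hqp => hqS (hqp ▸ hpS k)) hA))
      · have hqp : q k ≠ p k := fun h => hjk.ne (hp_inj (hqj.symm.trans h))
        exact ih j hjk (hqj ▸ hM _ hk _ hqp hA)
  have hsub : M ⊆ S \ univ.image p := fun i hi =>
    mem_sdiff.2 ⟨hMS hi, fun hip => by
      obtain ⟨k, -, rfl⟩ := mem_image.1 hip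
      exact hpM k hi⟩
  have himage : (univ.image p).card = S.card - 1 := by
    rw [card_image_of_injective _ hp_inj, card_univ, Fintype.card_fin]
  have himage_sub : univ.image p ⊆ S := fun i hi => by
    obtain ⟨k, -, rfl⟩ := mem_image.1 hi
    exact hpS k
  have := card_le_card hsub
  rw [card_sdiff_of_subset himage_sub, himage] at this
  omega

section NullVector

variable {x : ι → ℂ}

theorem norm_diag_mul_le_of_mulVec_eq_zero (hAx : A *ᵥ x = 0) (i : ι) :
    ‖A i i‖ * ‖x i‖ ≤ ∑ j ∈ univ.erase i, ‖A i j‖ * ‖x j‖ := by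
  have hrow : A i i * x i + ∑ j ∈ univ.erase i, A i j * x j = 0 := by
    rw [add_sum_erase univ (fun j => A i j * x j) (mem_univ i)]
    simpa [mulVec, dotProduct] using congrFun hAx i
  calc ‖A i i‖ * ‖x i‖ = ‖∑ j ∈ univ.erase i, A i j * x j‖ := by
        rw [← norm_mul, eq_neg_of_add_eq_zero_left hrow, norm_neg]
    _ ≤ ∑ j ∈ univ.erase i, ‖A i j * x j‖ := norm_sum_le _ _
    _ = ∑ j ∈ univ.erase i, ‖A i j‖ * ‖x j‖ := by simp only [norm_mul]

theorem mem_TSet_of_mulVec_eq_zero_of_forall_norm_le (hAx : A *ᵥ x = 0) (hx : x ≠ 0) {i : ι}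
    (hmax : ∀ j, ‖x j‖ ≤ ‖x i‖) : i ∈ TSet A := by
  obtain ⟨k, hxk⟩ := Function.ne_iff.1 hx
  have hxi : 0 < ‖x i‖ := (norm_pos_iff.2 hxk).trans_le (hmax k)
  have hbound : ‖A i i‖ * ‖x i‖ ≤ rowSum A i * ‖x i‖ :=
    calc ‖A i i‖ * ‖x i‖ ≤ ∑ j ∈ univ.erase i, ‖A i j‖ * ‖x j‖ :=
          norm_diag_mul_le_of_mulVec_eq_zero hAx i
      _ ≤ ∑ j ∈ univ.erase i, ‖A i j‖ * ‖x i‖ :=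
          sum_le_sum fun j _ => mul_le_mul_of_nonneg_left (hmax j) (norm_nonneg _)
      _ = rowSum A i * ‖x i‖ := (sum_mul _ _ _).symm
  simpa [TSet] using le_of_mul_le_mul_right hbound hxi

/-- Diagonal dominance of row `i` forces equality in `norm_diag_mul_le_of_mulVec_eq_zero`
and in `‖x j‖ ≤ ‖x i‖` wherever `a_ij ≠ 0`. -/
theorem norm_eq_of_mulVec_eq_zero_of_forall_norm_le (hDD : IsDD A) (hAx : A *ᵥ x = 0)
    {i j : ι} (hmax : ∀ k, ‖x k‖ ≤ ‖x i‖) (hji : j ≠ i) (hAij : A i j ≠ 0) :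
    ‖x j‖ = ‖x i‖ := by
  have hnonneg : ∀ k ∈ univ.erase i, 0 ≤ ‖A i k‖ * (‖x i‖ - ‖x k‖) := fun k _ =>
    mul_nonneg (norm_nonneg _) (sub_nonneg.2 (hmax k))
  have hsum_le : ∑ k ∈ univ.erase i, ‖A i k‖ * (‖x i‖ - ‖x k‖) ≤ 0 := by
    have hrow := norm_diag_mul_le_of_mulVec_eq_zero hAx i
    have hdom := mul_le_mul_of_nonneg_right (hDD i) (norm_nonneg (x i))
    simp only [mul_sub, sum_sub_distrib, ← sum_mul]
    unfold rowSum rowSumOn at hdom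
    linarith
  have hterm := (sum_eq_zero_iff_of_nonneg hnonneg).1 (hsum_le.antisymm (sum_nonneg hnonneg))
    j (mem_erase.2 ⟨hji, mem_univ j⟩)
  rcases mul_eq_zero.1 hterm with h | h
  · exact absurd (norm_eq_zero.1 h) hAij
  · linarith

theorem isOffDiagClosed_filter_forall_norm_le [DecidablePred fun i => ∀ j, ‖x j‖ ≤ ‖x i‖]
    (hDD : IsDD A) (hAx : A *ᵥ x = 0) :
    IsOffDiagClosed A (univ.filter fun i => ∀ j, ‖x j‖ ≤ ‖x i‖) := by
  intro i hi j hji hAij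
  simp only [mem_filter, mem_univ, true_and] at hi ⊢
  rw [norm_eq_of_mulVec_eq_zero_of_forall_norm_le hDD hAx hi hji hAij]
  exact hi

end NullVector

theorem farid_nonsingular_general (n : ℕ)
    (A : Matrix (Fin n) (Fin n) ℂ) (hDD : IsDD A)
    (hdiag : ∀ i, A i i ≠ 0) (hint : Interwoven A (TSet A)) :
    A.det ≠ 0 := by
  intro hdet
  obtain ⟨x, hx, hAx⟩ : ∃ x ≠ 0, A *ᵥ x = 0 := exists_mulVec_eq_zero_iff.2 hdet
  set M := univ.filter fun i => ∀ j, ‖x j‖ ≤ ‖x i‖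
  have hMT : M ⊆ TSet A := fun i hi =>
    mem_TSet_of_mulVec_eq_zero_of_forall_norm_le hAx hx (mem_filter.1 hi).2
  have hMclosed : IsOffDiagClosed A M := isOffDiagClosed_filter_forall_norm_le hDD hAx
  obtain ⟨k, -⟩ := Function.ne_iff.1 hx
  have : Nonempty (Fin n) := ⟨k⟩
  obtain ⟨i, -, hi⟩ := exists_max_image univ (fun j => ‖x j‖) univ_nonempty
  have hiM : i ∈ M := mem_filter.2 ⟨mem_univ i, fun j => hi j (mem_univ j)⟩
  have hrow : 0 < rowSum A i :=
    (norm_pos_iff.2 (hdiag i)).trans_le (mem_filter.1 (hMT hiM)).2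
  obtain ⟨j, hji, hAij⟩ := exists_ne_ne_zero_of_rowSum_pos hrow
  exact hji (card_le_one.1 (hint.card_le_one_of_isOffDiagClosed hMT hMclosed) j
    (hMclosed i hiM j hji hAij) i hiM)

/-- Farid. A DD matrix `A ∈ ℂⁿˣⁿ`, `n ≥ 2`, with nonzero
diagonal entries such that `T(A)` is an interwoven set of indices for `A`,
is nonsingular. -/
theorem farid_nonsingular (n : ℕ) (hn : 2 ≤ n)
    (A : Matrix (Fin n) (Fin n) ℂ) (hDD : IsDD A)
    (hdiag : ∀ i, A i i ≠ 0) (hint : Interwoven A (TSet A)) :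
    A.det ≠ 0 :=
  farid_nonsingular_general n A hDD hdiag hint

end
end

section
/- Let A = [a_ij] ∈ ℂ^{n×n}, n ≥ 2, be a DD matrix. Then the following two conditions are equivalent: (1) T(A) = ∅, or for each i₀ ∈ T(A) there exists a nonzero elements chain a_{i₀i₁}, a_{i₁i₂}, …, a_{i_{r-1}i_r} with i_r ∈ N \ T(A); (2) A has nonzero diagonal entries and T(A) is an interwoven set of indices for A. -/
open scoped BigOperators

noncomputable section

/-!
Read `a_ij ≠ 0` as an edge `i → j`; condition (1) says that every index of `T(A)` reaches
`N \ T(A)`. In an interwoven listing `p₁, p₂, …` of `T(A)` each `p_i` has an edge out of `T(A)`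
or to an earlier `p_j`, so every listed index reaches `N \ T(A)`; the one index of `T(A)` left
out has an off-diagonal edge as well (since `0 < |a_ii| ≤ r_i(A)`), and it leads out of `T(A)`
or into the listing. Conversely, if every index of `T(A)` reaches `N \ T(A)`, a path from an
unlisted index of `T(A)` to `N \ T(A)` must at some edge leave the set of unlisted indices of
`T(A)`; the tail of that edge is the next element of the listing. Diagonal dominance makes a row
with `a_ii = 0` vanish, so no chain can start there.
-/

open Relation

section Relation

variable {α : Type*} {R : α → α → Prop}

theorem reflTransGen_of_fin_chain {r : ℕ} {c : Fin (r + 1) → α}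
    (hc : ∀ k : Fin r, R (c k.castSucc) (c k.succ)) : ReflTransGen R (c 0) (c (Fin.last r)) := by
  induction r with
  | zero => exact ReflTransGen.refl
  | succ r ih =>
    exact ReflTransGen.head (hc 0) (ih (c := Fin.tail c) fun k => hc k.succ)

theorem transGen_of_fin_chain {r : ℕ} (hr : 0 < r) {c : Fin (r + 1) → α}
    (hc : ∀ k : Fin r, R (c k.castSucc) (c k.succ)) : TransGen R (c 0) (c (Fin.last r)) := by
  obtain ⟨r, rfl⟩ := Nat.exists_eq_add_one_of_ne_zero hr.ne'
  exact TransGen.head' (hc 0) (reflTransGen_of_fin_chain (c := Fin.tail c) fun k => hc k.succ)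

theorem Relation.TransGen.exists_fin_chain {a b : α} (h : TransGen R a b) :
    ∃ (r : ℕ) (c : Fin (r + 1) → α), 0 < r ∧ c 0 = a ∧
      (∀ k : Fin r, R (c k.castSucc) (c k.succ)) ∧ c (Fin.last r) = b := by
  induction h using TransGen.head_induction_on with
  | single hab => exact ⟨1, ![_, b], one_pos, rfl, fun k => by fin_cases k; exact hab, rfl⟩
  | @head a a' haa' _ ih =>
    obtain ⟨r, c, -, hc0, hc, hcb⟩ := ih
    refine ⟨r + 1, Fin.cons a c, r.succ_pos, rfl, fun k => ?_, hcb⟩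
    refine Fin.cases (by simpa [hc0] using haa') (fun k => ?_) k
    simpa [← Fin.succ_castSucc] using hc k

theorem Relation.TransGen.exists_rel_mem_notMem {T : Set α} {a b : α} (h : TransGen R a b)
    (ha : a ∈ T) (hb : b ∉ T) : ∃ x ∈ T, ∃ y ∉ T, R x y := by
  induction h using TransGen.head_induction_on with
  | single hab => exact ⟨_, ha, b, hb, hab⟩
  | @head a a' haa' _ ih =>
    by_cases ha' : a' ∈ T
    · exact ih ha'
    · exact ⟨a, ha, a', ha', haa'⟩

end Relation

section InterwovenSeq

variable {α : Type*} (R : α → α → Prop) (S : Finset α)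

def IsInterwovenSeq {k : ℕ} (p : Fin k → α) : Prop :=
  Function.Injective p ∧ (∀ i, p i ∈ S) ∧ ∀ i, ∃ q, R (p i) q ∧ (q ∉ S ∨ ∃ j < i, q = p j)

variable {R S}

theorem isInterwovenSeq_of_fin_zero (p : Fin 0 → α) : IsInterwovenSeq R S p :=
  ⟨fun i => i.elim0, fun i => i.elim0, fun i => i.elim0⟩

theorem IsInterwovenSeq.snoc {k : ℕ} {p : Fin k → α} (hp : IsInterwovenSeq R S p) {x y : α}
    (hx : x ∈ S) (hxp : x ∉ Set.range p) (hxy : R x y) (hy : y ∉ S ∨ y ∈ Set.range p) :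
    IsInterwovenSeq R S (Fin.snoc (α := fun _ => α) p x) := by
  obtain ⟨hinj, hmem, hnext⟩ := hp
  refine ⟨?_, Fin.lastCases (by simpa using hx) (by simpa using hmem), ?_⟩
  · exact Fin.snoc_injective_iff.2 ⟨hinj, hxp⟩
  · refine Fin.lastCases ⟨y, by simpa using hxy, ?_⟩ fun i => ?_
    · rcases hy with hy | ⟨j, rfl⟩
      · exact Or.inl hy
      · exact Or.inr ⟨j.castSucc, Fin.castSucc_lt_last j, by simp⟩
    · obtain ⟨q, hpq, hq⟩ := hnext i
      refine ⟨q, by simpa using hpq, ?_⟩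
      rcases hq with hq | ⟨j, hji, rfl⟩
      · exact Or.inl hq
      · exact Or.inr ⟨j.castSucc, Fin.castSucc_lt_castSucc_iff.2 hji, by simp⟩

theorem exists_isInterwovenSeq (hS : ∀ i ∈ S, ∃ j ∉ S, TransGen R i j) :
    ∀ k ≤ S.card, ∃ p : Fin k → α, IsInterwovenSeq R S p
  | 0, _ => ⟨Fin.elim0, isInterwovenSeq_of_fin_zero _⟩
  | k + 1, hk => by
    obtain ⟨p, hp⟩ := exists_isInterwovenSeq hS k (by omega)
    obtain ⟨a, haS, hap⟩ : ∃ a ∈ S, a ∉ Finset.univ.map ⟨p, hp.1⟩ :=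
      Finset.exists_mem_notMem_of_card_lt_card (by simpa using hk)
    obtain ⟨b, hbS, hab⟩ := hS a haS
    obtain ⟨x, ⟨hxS, hxp⟩, y, hy, hxy⟩ :=
      hab.exists_rel_mem_notMem (T := {x | x ∈ S ∧ x ∉ Set.range p})
        ⟨haS, by simpa using hap⟩ fun h => hbS h.1
    exact ⟨_, hp.snoc hxS hxp hxy (by simpa [or_iff_not_imp_left] using hy)⟩

theorem IsInterwovenSeq.exists_transGen {k : ℕ} {p : Fin k → α} (hp : IsInterwovenSeq R S p)
    (i : Fin k) : ∃ j ∉ S, TransGen R (p i) j := by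
  induction i using WellFoundedLT.induction with
  | _ i ih =>
    obtain ⟨q, hpq, hq⟩ := hp.2.2 i
    rcases hq with hq | ⟨j, hji, rfl⟩
    · exact ⟨q, hq, .single hpq⟩
    · obtain ⟨b, hb, hjb⟩ := ih j hji
      exact ⟨b, hb, .head hpq hjb⟩

theorem IsInterwovenSeq.forall_exists_transGen {k : ℕ} {p : Fin k → α}
    (hp : IsInterwovenSeq R S p) (hcard : S.card ≤ k + 1) (hR : ∀ m ∈ S, ∃ j ≠ m, R m j) :
    ∀ m ∈ S, ∃ j ∉ S, TransGen R m j := by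
  intro m hm
  by_cases hmp : m ∈ Set.range p
  · obtain ⟨i, rfl⟩ := hmp
    exact hp.exists_transGen i
  obtain ⟨j, hjm, hmj⟩ := hR m hm
  by_cases hjS : j ∉ S
  · exact ⟨j, hjS, .single hmj⟩
  have hmp' : m ∉ Finset.univ.map ⟨p, hp.1⟩ := by simpa using hmp
  have hS : Finset.cons m (Finset.univ.map ⟨p, hp.1⟩) hmp' = S := by
    refine Finset.eq_of_subset_of_card_le ?_ (by simpa using hcard)
    simpa [Finset.insert_subset_iff, Finset.subset_iff, hm] using hp.2.1
  obtain ⟨i, rfl⟩ : j ∈ Set.range p := by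
    simpa [← hS, hjm] using not_not.1 hjS
  obtain ⟨b, hb, hjb⟩ := hp.exists_transGen i
  exact ⟨b, hb, .head hmj hjb⟩

end InterwovenSeq

section Matrix

variable {ι : Type*} [Fintype ι] [DecidableEq ι] {A : Matrix ι ι ℂ}

theorem mem_TSet_iff {i : ι} : i ∈ TSet A ↔ ‖A i i‖ ≤ rowSum A i := by
  simp [TSet]

theorem hasChainOut_iff_exists_transGen {i : ι} :
    HasChainOut A i ↔ ∃ j ∉ TSet A, TransGen (fun a b => A a b ≠ 0) i j := by
  constructor
  · rintro ⟨r, c, hr, rfl, hc, hlast⟩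
    exact ⟨_, hlast, transGen_of_fin_chain hr hc⟩
  · rintro ⟨j, hj, hij⟩
    obtain ⟨r, c, hr, hc0, hc, rfl⟩ := hij.exists_fin_chain
    exact ⟨r, c, hr, hc0, hc, hj⟩

theorem rowSum_nonneg (i : ι) : 0 ≤ rowSum A i :=
  Finset.sum_nonneg fun _ _ => norm_nonneg _

theorem rowSum_eq_zero_iff {i : ι} : rowSum A i = 0 ↔ ∀ j ≠ i, A i j = 0 := by
  simp only [rowSum, rowSumOn, Finset.sum_eq_zero_iff_of_nonneg fun _ _ => norm_nonneg _,
    Finset.mem_erase, Finset.mem_univ, and_true, norm_eq_zero]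

theorem IsDD.eq_zero_of_diag_eq_zero (hA : IsDD A) {i : ι} (hi : A i i = 0) (j : ι) :
    A i j = 0 := by
  obtain rfl | hji := eq_or_ne j i
  · exact hi
  have hrow : rowSum A i = 0 := le_antisymm (by simpa [hi] using hA i) (rowSum_nonneg i)
  exact rowSum_eq_zero_iff.1 hrow j hji

theorem exists_ne_ne_zero_of_mem_TSet {i : ι} (hi : i ∈ TSet A) (hii : A i i ≠ 0) :
    ∃ j ≠ i, A i j ≠ 0 := by
  by_contra! h
  have hle := mem_TSet_iff.1 hi
  rw [rowSum_eq_zero_iff.2 h, norm_le_zero_iff] at hle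
  exact hii hle

theorem interwoven_iff {S : Finset ι} :
    Interwoven A S ↔ S ⊂ Finset.univ ∧ (S.card ≤ 1 ∨
      1 < S.card ∧ ∃ p : Fin (S.card - 1) → ι, IsInterwovenSeq (fun a b => A a b ≠ 0) S p) := by
  simp only [Interwoven, IsInterwovenSeq, Classical.skolem (b := fun _ => ι), exists_and_left]

end Matrix

/-- For a DD matrix `A ∈ ℂⁿˣⁿ`, `n ≥ 2`, the Shivakumar–Chew
chain condition and the Farid interwoven condition are equivalent. -/
theorem chain_iff_interwoven (n : ℕ) (hn : 2 ≤ n)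
    (A : Matrix (Fin n) (Fin n) ℂ) (hDD : IsDD A) :
    (TSet A = ∅ ∨ ∀ i₀ ∈ TSet A, HasChainOut A i₀) ↔
      ((∀ i, A i i ≠ 0) ∧ Interwoven A (TSet A)) := by
  rw [or_iff_right_of_imp fun h i hi => by simp [h] at hi, interwoven_iff]
  simp only [hasChainOut_iff_exists_transGen]
  constructor
  · intro hout
    refine ⟨fun i hii => ?_, ?_, ?_⟩
    · obtain ⟨j, -, hij⟩ := hout i (mem_TSet_iff.2 (by simpa [hii] using rowSum_nonneg i))
      obtain ⟨j', hij', -⟩ := TransGen.head'_iff.1 hij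
      exact hij' (hDD.eq_zero_of_diag_eq_zero hii j')
    · refine Finset.ssubset_univ_iff.2 fun hT => ?_
      obtain ⟨j, hj, -⟩ := hout ⟨0, by omega⟩ (hT ▸ Finset.mem_univ _)
      exact hj (hT ▸ Finset.mem_univ j)
    · rcases le_or_gt (TSet A).card 1 with h | h
      · exact Or.inl h
      · exact Or.inr ⟨h, exists_isInterwovenSeq hout _ (Nat.sub_le _ _)⟩
  · rintro ⟨hdiag, -, hseq⟩
    obtain ⟨k, p, hp, hcard⟩ : ∃ (k : ℕ) (p : Fin k → Fin n),
        IsInterwovenSeq (fun a b => A a b ≠ 0) (TSet A) p ∧ (TSet A).card ≤ k + 1 := by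
      rcases hseq with h | ⟨h, p, hp⟩
      · exact ⟨0, Fin.elim0, isInterwovenSeq_of_fin_zero _, h⟩
      · exact ⟨_, p, hp, by omega⟩
    exact hp.forall_exists_transGen hcard fun m hm => exists_ne_ne_zero_of_mem_TSet hm (hdiag m)

end
end

section
/- Let A = [a_ij] ∈ ℂ^{n×n}, n ≥ 2, be a DD matrix such that T(A) = ∅ or the principal submatrix A|_{T(A)²} is an SDD matrix. Then A is an H-matrix. -/
open scoped BigOperators

noncomputable section

/-
Scale the columns outside `T = T(A)` by a common factor `t < 1`. A row `i ∈ T` then has scaled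
off-diagonal sum `r_i^T + t r_i^{N∖T} = (1 - t) r_i^T + t r_i ≤ (1 - t) r_i^T + t |a_ii|`, which is
below `|a_ii|` because `r_i^T < |a_ii|`. A row `i ∉ T` needs `r_i^T + t r_i^{N∖T} < t |a_ii|`, which
holds strictly at `t = 1` and hence, by continuity, for all `t < 1` close enough to `1`.
-/

open Filter Topology

section RowSums

variable {ι : Type*} [Fintype ι] [DecidableEq ι]

lemma sum_erase_univ_eq_add_compl {M : Type*} [AddCommMonoid M] (S : Finset ι) (i : ι)
    (f : ι → M) :
    ∑ j ∈ Finset.univ.erase i, f j = ∑ j ∈ S.erase i, f j + ∑ j ∈ Sᶜ.erase i, f j := by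
  rw [← Finset.sum_filter_add_sum_filter_not _ (· ∈ S), Finset.filter_erase,
    Finset.filter_erase]
  simp only [Finset.filter_mem_eq_inter, Finset.univ_inter, Finset.filter_not,
    Finset.compl_eq_univ_sdiff]

lemma rowSum_eq_rowSumOn_add_rowSumOn_compl (A : Matrix ι ι ℂ) (S : Finset ι) (i : ι) :
    rowSum A i = rowSumOn A S i + rowSumOn A Sᶜ i :=
  sum_erase_univ_eq_add_compl S i _

lemma rowSum_subMat (A : Matrix ι ι ℂ) (S : Finset ι) (i : S) :
    rowSum (subMat A S) i = rowSumOn A S i := by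
  unfold rowSum rowSumOn subMat
  rw [Finset.sum_erase_eq_sub (Finset.mem_univ _), Finset.sum_erase_eq_sub i.2]
  simp only [Matrix.of_apply]
  rw [Finset.sum_coe_sort S fun j => ‖A i j‖]

lemma norm_mul_diagonal_ofReal (A : Matrix ι ι ℂ) {d : ι → ℝ} (hd : ∀ j, 0 ≤ d j) (i j : ι) :
    ‖(A * Matrix.diagonal fun k => (d k : ℂ)) i j‖ = ‖A i j‖ * d j := by
  rw [Matrix.mul_diagonal, norm_mul, Complex.norm_real, Real.norm_of_nonneg (hd j)]

lemma rowSum_mul_diagonal_ite (A : Matrix ι ι ℂ) (S : Finset ι) {t : ℝ} (ht : 0 ≤ t) (i : ι) :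
    rowSum (A * Matrix.diagonal fun k => ((if k ∈ S then 1 else t : ℝ) : ℂ)) i =
      rowSumOn A S i + t * rowSumOn A Sᶜ i := by
  have hd : ∀ k, 0 ≤ (if k ∈ S then 1 else t : ℝ) := fun k => by split_ifs <;> positivity
  unfold rowSum rowSumOn
  simp only [norm_mul_diagonal_ofReal A hd]
  rw [sum_erase_univ_eq_add_compl S, Finset.mul_sum]
  congr 1 <;> refine Finset.sum_congr rfl fun j hj => ?_
  · simp [Finset.mem_of_mem_erase hj]
  · simp [Finset.mem_compl.1 (Finset.mem_of_mem_erase hj), mul_comm]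

end RowSums

theorem isHMatrix_of_isDD_of_rowSumOn_TSet_lt {ι : Type*} [Fintype ι] [DecidableEq ι]
    {A : Matrix ι ι ℂ} (hDD : IsDD A) (hT : ∀ i ∈ TSet A, rowSumOn A (TSet A) i < ‖A i i‖) :
    IsHMatrix A := by
  set T := TSet A
  have hIoo : ∀ᶠ t in 𝓝[<] (1 : ℝ), t ∈ Set.Ioo 0 1 := Ioo_mem_nhdsLT one_pos
  have hrow : ∀ i, ∀ᶠ t in 𝓝[<] (1 : ℝ),
      rowSumOn A T i + t * rowSumOn A Tᶜ i < ‖A i i‖ * (if i ∈ T then 1 else t) := by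
    intro i
    have hsplit := rowSum_eq_rowSumOn_add_rowSumOn_compl A T i
    by_cases hi : i ∈ T
    · filter_upwards [hIoo] with t ⟨ht0, ht1⟩
      rw [if_pos hi, mul_one]
      calc rowSumOn A T i + t * rowSumOn A Tᶜ i
          = (1 - t) * rowSumOn A T i + t * rowSum A i := by rw [hsplit]; ring
        _ ≤ (1 - t) * rowSumOn A T i + t * ‖A i i‖ := by gcongr; exact hDD i
        _ < (1 - t) * ‖A i i‖ + t * ‖A i i‖ := by
          linarith [mul_lt_mul_of_pos_left (hT i hi) (sub_pos.2 ht1)]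
        _ = ‖A i i‖ := by ring
    · have hstrict : rowSum A i < ‖A i i‖ := by simpa [T, TSet] using hi
      simp only [if_neg hi]
      refine nhdsWithin_le_nhds (ContinuousAt.eventually_lt (by fun_prop) (by fun_prop) ?_)
      simpa [← hsplit] using hstrict
  obtain ⟨t, ⟨ht0, -⟩, hlt⟩ := (hIoo.and (eventually_all.2 hrow)).exists
  have hd : ∀ k, 0 < (if k ∈ T then 1 else t : ℝ) := fun k => by split_ifs <;> positivity
  refine ⟨fun k => if k ∈ T then 1 else t, hd, fun i => ?_⟩
  rw [rowSum_mul_diagonal_ite A T ht0.le, norm_mul_diagonal_ofReal A fun k => (hd k).le]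
  exact hlt i

theorem dd_tset_sdd_hmatrix_general (n : ℕ)
    (A : Matrix (Fin n) (Fin n) ℂ) (hDD : IsDD A)
    (h : TSet A = ∅ ∨ IsSDD (subMat A (TSet A))) :
    IsHMatrix A := by
  refine isHMatrix_of_isDD_of_rowSumOn_TSet_lt hDD fun i hi => ?_
  rcases h with hempty | hsdd
  · simp [hempty] at hi
  · rw [← rowSum_subMat A _ ⟨i, hi⟩]
    exact hsdd ⟨i, hi⟩

/-- A DD matrix `A ∈ ℂⁿˣⁿ`, `n ≥ 2`, such that `T(A) = ∅` or
the principal submatrix `A|_{T(A)²}` is SDD, is an H-matrix. -/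
theorem dd_tset_sdd_hmatrix (n : ℕ) (hn : 2 ≤ n)
    (A : Matrix (Fin n) (Fin n) ℂ) (hDD : IsDD A)
    (h : TSet A = ∅ ∨ IsSDD (subMat A (TSet A))) :
    IsHMatrix A :=
  dd_tset_sdd_hmatrix_general n A hDD h

end
end

section
/- Let A = [a_ij] ∈ ℂ^{n×n}, n ≥ 2, be a DD matrix such that T(A) ≠ ∅. If the principal submatrix A|_{T(A)²} is SDD by columns, then A is an H-matrix. -/
open scoped BigOperators

noncomputable section

/-! The comparison matrix `ℳ(B)` of a matrix `B` that is SDD by columns is invertible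
(Lévy–Desplanques), and the solution of `ℳ(B) x = 𝟙` is positive, so `x` scales `B` to an
SDD matrix. For `B = A|_{T(A)²}` this gives weights `y > 0` on `T(A)`. Extending `y` by zero,
the weights `1 + ε y` make the rows in `T(A)`, where `A` has equality, strictly dominant, and
keep the remaining rows strictly dominant for small `ε > 0`. -/

open Finset Matrix

section ZMatrix

variable {ι : Type*} [Fintype ι] [DecidableEq ι] {M : Matrix ι ι ℝ}

-- Summing the rows indexed by `{i | x i < 0}` of `M *ᵥ x` gives a sum that is positive, but
-- column dominance makes every column contribute a nonpositive amount.
theorem nonneg_of_mulVec_pos (hoff : ∀ i j, i ≠ j → M i j ≤ 0)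
    (hcol : ∀ j, ∑ i ∈ univ.erase j, |M i j| < M j j) {x : ι → ℝ}
    (hx : ∀ i, 0 < (M *ᵥ x) i) (i : ι) : 0 ≤ x i := by
  by_contra! hxi
  set S := univ.filter fun j => x j < 0
  have hiS : i ∈ S := by simp [S, hxi]
  have hcolsum_pos : ∀ j ∈ S, 0 < ∑ k ∈ S, M k j := fun j hj => by
    rw [← add_sum_erase S _ hj]
    have : -∑ k ∈ univ.erase j, |M k j| ≤ ∑ k ∈ S.erase j, M k j :=
      calc -∑ k ∈ univ.erase j, |M k j| ≤ -∑ k ∈ S.erase j, |M k j| :=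
            neg_le_neg (sum_le_sum_of_subset_of_nonneg (erase_subset_erase _ (subset_univ _))
              fun _ _ _ => abs_nonneg _)
        _ ≤ ∑ k ∈ S.erase j, M k j := by
            rw [← sum_neg_distrib]; exact sum_le_sum fun k _ => neg_abs_le _
    linarith [hcol j]
  have hcolsum_nonpos : ∀ j ∉ S, ∑ k ∈ S, M k j ≤ 0 := fun j hj =>
    sum_nonpos fun k hk => hoff k j (ne_of_mem_of_not_mem hk hj)
  have hpos : 0 < ∑ k ∈ S, (M *ᵥ x) k := sum_pos (fun k _ => hx k) ⟨i, hiS⟩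
  have hneg : ∑ j, x j * ∑ k ∈ S, M k j < 0 := by
    refine sum_neg' (fun j _ => ?_) ⟨i, mem_univ _, ?_⟩
    · by_cases hj : j ∈ S
      · exact (mul_neg_of_neg_of_pos (by simpa [S] using hj) (hcolsum_pos j hj)).le
      · exact mul_nonpos_of_nonneg_of_nonpos (by simpa [S] using hj) (hcolsum_nonpos j hj)
    · exact mul_neg_of_neg_of_pos hxi (hcolsum_pos i hiS)
  have : ∑ k ∈ S, (M *ᵥ x) k = ∑ j, x j * ∑ k ∈ S, M k j := by
    simp only [mulVec, dotProduct, mul_sum]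
    rw [sum_comm]
    exact sum_congr rfl fun _ _ => sum_congr rfl fun _ _ => mul_comm _ _
  linarith

theorem pos_of_mulVec_pos (hoff : ∀ i j, i ≠ j → M i j ≤ 0)
    (hcol : ∀ j, ∑ i ∈ univ.erase j, |M i j| < M j j) {x : ι → ℝ}
    (hx : ∀ i, 0 < (M *ᵥ x) i) (i : ι) : 0 < x i := by
  have hdiag : 0 < M i i := (sum_nonneg fun _ _ => abs_nonneg _).trans_lt (hcol i)
  have hrest : ∑ j ∈ univ.erase i, M i j * x j ≤ 0 := sum_nonpos fun j hj =>
    mul_nonpos_of_nonpos_of_nonneg (hoff i j (ne_of_mem_erase hj).symm)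
      (nonneg_of_mulVec_pos hoff hcol hx j)
  have hMx : (M *ᵥ x) i = M i i * x i + ∑ j ∈ univ.erase i, M i j * x j :=
    (add_sum_erase _ _ (mem_univ i)).symm
  exact pos_of_mul_pos_right (by linarith [hx i]) hdiag.le

theorem exists_pos_mulVec_pos (hoff : ∀ i j, i ≠ j → M i j ≤ 0)
    (hcol : ∀ j, ∑ i ∈ univ.erase j, |M i j| < M j j) :
    ∃ x : ι → ℝ, (∀ i, 0 < x i) ∧ ∀ i, 0 < (M *ᵥ x) i := by
  have hdet : IsUnit M.det := isUnit_iff_ne_zero.mpr <| det_ne_zero_of_sum_col_lt_diag fun j => by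
    simpa only [Real.norm_eq_abs, abs_of_pos ((sum_nonneg fun _ _ => abs_nonneg _).trans_lt
      (hcol j))] using hcol j
  have hMx : M *ᵥ (M⁻¹ *ᵥ 1) = 1 := by rw [mulVec_mulVec, mul_nonsing_inv _ hdet, one_mulVec]
  have hpos : ∀ i, 0 < (M *ᵥ (M⁻¹ *ᵥ 1)) i := fun i => by simp [hMx]
  exact ⟨_, pos_of_mulVec_pos hoff hcol hpos, hpos⟩

end ZMatrix

open Filter Topology in
theorem exists_pos_forall_add_mul_pos {ι : Type*} [Finite ι] {a b : ι → ℝ}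
    (h : ∀ i, 0 < a i ∨ 0 ≤ a i ∧ 0 < b i) : ∃ ε > 0, ∀ i, 0 < a i + ε * b i := by
  have hev : ∀ i, ∀ᶠ ε in 𝓝[>] (0 : ℝ), 0 < a i + ε * b i := fun i => by
    rcases h i with ha | ⟨ha, hb⟩
    · refine nhdsWithin_le_nhds (continuousAt_const.eventually_lt (by fun_prop) ?_)
      simpa using ha
    · filter_upwards [self_mem_nhdsWithin] with ε hε
      exact add_pos_of_nonneg_of_pos ha (mul_pos hε hb)
  obtain ⟨ε, hε, hεpos⟩ := ((eventually_all.mpr hev).and self_mem_nhdsWithin).exists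
  exact ⟨ε, hεpos, hε⟩

section HMatrix

variable {ι : Type*} [Fintype ι] [DecidableEq ι] {A : Matrix ι ι ℂ}

theorem norm_mul_diagonal_ofReal_apply {d : ι → ℝ} (hd : ∀ j, 0 ≤ d j) (i j : ι) :
    ‖(A * diagonal fun k => (d k : ℂ)) i j‖ = ‖A i j‖ * d j := by
  rw [mul_diagonal, norm_mul, Complex.norm_real, Real.norm_of_nonneg (hd j)]

theorem isHMatrix_iff : IsHMatrix A ↔ ∃ d : ι → ℝ, (∀ i, 0 < d i) ∧
    ∀ i, ∑ j ∈ univ.erase i, ‖A i j‖ * d j < ‖A i i‖ * d i := by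
  refine exists_congr fun d => and_congr_right fun hd => forall_congr' fun i => ?_
  simp only [rowSum, rowSumOn, norm_mul_diagonal_ofReal_apply fun j => (hd j).le]

theorem compMat_apply_nonpos_of_ne (A : Matrix ι ι ℂ) {i j : ι} (hij : i ≠ j) :
    CompMat A i j ≤ 0 := by
  simp [CompMat, hij]

theorem compMat_mulVec_apply (x : ι → ℝ) (i : ι) :
    (CompMat A *ᵥ x) i = ‖A i i‖ * x i - ∑ j ∈ univ.erase i, ‖A i j‖ * x j := by
  rw [mulVec, dotProduct, ← add_sum_erase _ _ (mem_univ i), sub_eq_add_neg, ← sum_neg_distrib]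
  congr 1
  · simp [CompMat]
  · exact sum_congr rfl fun j hj => by simp [CompMat, (ne_of_mem_erase hj).symm]

theorem isHMatrix_of_isSDD_transpose (h : IsSDD Aᵀ) : IsHMatrix A := by
  have hcol : ∀ j, ∑ i ∈ univ.erase j, |CompMat A i j| < CompMat A j j := fun j => by
    have : ∑ i ∈ univ.erase j, |CompMat A i j| = rowSum Aᵀ j :=
      sum_congr rfl fun i hi => by simp [CompMat, ne_of_mem_erase hi]
    rw [this]
    simpa [CompMat] using h j
  obtain ⟨d, hd, hMd⟩ := exists_pos_mulVec_pos (fun _ _ => compMat_apply_nonpos_of_ne A) hcol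
  refine isHMatrix_iff.mpr ⟨d, hd, fun i => ?_⟩
  linarith [compMat_mulVec_apply (A := A) d i, hMd i]

theorem sum_univ_erase_eq_sum_subtype_erase {s : Finset ι} {i : ι} (hi : i ∈ s) {f : ι → ℝ}
    (hf : ∀ j ∉ s, f j = 0) :
    ∑ j ∈ univ.erase i, f j = ∑ j ∈ (univ : Finset s).erase ⟨i, hi⟩, f j := by
  rw [sum_erase_eq_sub (mem_univ _), sum_erase_eq_sub (mem_univ _), sum_coe_sort s f,
    sum_subset (subset_univ s) fun j _ hj => hf j hj]

theorem isHMatrix_of_isDD_of_isHMatrix_subMat (hA : IsDD A)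
    (hT : IsHMatrix (subMat A (TSet A))) : IsHMatrix A := by
  obtain ⟨d, hd, hdT⟩ := isHMatrix_iff.mp hT
  set Y : ι → ℝ := fun j => if h : j ∈ TSet A then d ⟨j, h⟩ else 0
  have hY : ∀ j, 0 ≤ Y j := fun j => by
    by_cases hj : j ∈ TSet A <;> simp [Y, hj, (hd _).le]
  have hYT : ∀ i ∈ TSet A, ∑ j ∈ univ.erase i, ‖A i j‖ * Y j < ‖A i i‖ * Y i := by
    intro i hi
    rw [sum_univ_erase_eq_sum_subtype_erase hi fun j hj => by simp [Y, hj]]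
    simpa [Y, hi, subMat] using hdT ⟨i, hi⟩
  obtain ⟨ε, hε, hpos⟩ := exists_pos_forall_add_mul_pos
    (a := fun i => ‖A i i‖ - rowSum A i)
    (b := fun i => ‖A i i‖ * Y i - ∑ j ∈ univ.erase i, ‖A i j‖ * Y j) fun i => by
      by_cases hi : i ∈ TSet A
      · exact .inr ⟨sub_nonneg.2 (hA i), sub_pos.2 (hYT i hi)⟩
      · exact .inl (sub_pos.2 (by simpa [TSet] using hi))
  refine isHMatrix_iff.mpr ⟨fun j => 1 + ε * Y j,
    fun j => add_pos_of_pos_of_nonneg one_pos (mul_nonneg hε.le (hY j)), fun i => ?_⟩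
  have hsum : ∑ j ∈ univ.erase i, ‖A i j‖ * (1 + ε * Y j) =
      rowSum A i + ε * ∑ j ∈ univ.erase i, ‖A i j‖ * Y j := by
    simp only [rowSum, rowSumOn, mul_add, mul_one, sum_add_distrib, mul_sum, mul_left_comm]
  rw [hsum]
  linear_combination hpos i

end HMatrix

theorem dd_tset_sdd_columns_hmatrix_general (n : ℕ)
    (A : Matrix (Fin n) (Fin n) ℂ) (hDD : IsDD A)
    (hcol : IsSDD (subMat A (TSet A)).transpose) :
    IsHMatrix A :=
  isHMatrix_of_isDD_of_isHMatrix_subMat hDD (isHMatrix_of_isSDD_transpose hcol)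

/-- Lemma. A DD matrix `A ∈ ℂⁿˣⁿ`, `n ≥ 2`, with
`T(A) ≠ ∅` whose principal submatrix `A|_{T(A)²}` is SDD by columns,
is an H-matrix. -/
theorem dd_tset_sdd_columns_hmatrix (n : ℕ) (hn : 2 ≤ n)
    (A : Matrix (Fin n) (Fin n) ℂ) (hDD : IsDD A)
    (hT : TSet A ≠ ∅)
    (hcol : IsSDD (subMat A (TSet A)).transpose) :
    IsHMatrix A :=
  dd_tset_sdd_columns_hmatrix_general n A hDD hcol

end
end
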